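/- arXiv:0801.1408 — 3 statements merged into one kernel-verified Lean document; each statement's English description precedes it below -/
import Mathlib

section
/- For every A = ∫ dx Q(x) δS₀/δφ(x) in the ideal 𝓙 generated by the free field equation, and every interaction S, the classical off-shell Master Ward Identity holds: (A + δ_A S) ∘ r_{S₀+S,S₀} = ∫ dx (Q(x) ∘ r_{S₀+S,S₀}) · δS₀/δφ(x), where δ_A = ∫ dx Q(x) δ/δφ(x). -/
theorem classical_off_shell_MWI
    {C X : Type*}
    (r : C → C) (Q g₀ dS : X → C → ℂ)
    (hr : ∀ x : X, (fun c => g₀ x c + dS x c) ∘ r = g₀ x)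
    (I : (X → C → ℂ) → (C → ℂ))
    (hI : ∀ f : X → C → ℂ, (I f) ∘ r = I (fun x => f x ∘ r)) :
    (I fun x c => Q x c * (g₀ x c + dS x c)) ∘ r
      = I (fun x c => Q x (r c) * g₀ x c) := by
  rw [hI]
  apply congrArg
  funext x c
  have := congrFun (hr x) c
  simp only [Function.comp] at this ⊢
  rw [this]
end

section
/- For the vertex functional Γ defined by Tᶜ(e_⊗^{iS/ħ}) = Tᶜ_tree(e_⊗^{iΓ(e_⊗^S)/ħ}), one has Γ(1) = 0 and Γ(S) = S; moreover, if Tₙᶜ − Tᶜ_{tree,n} = O(ħⁿ) for every n, then Γ(e_⊗^S) = S + O(ħ) and Γ(e_⊗^S ⊗ F) = F + O(ħ) for S, F of order ħ⁰. -/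
/-!
STATEMENT 6: `Γ(1) = 0`, `Γ(S) = S`, and `Γ(e_⊗^S) = S + O(ħ)`,
`Γ(e_⊗^S ⊗ F) = F + O(ħ)`.

Formal power series in `ħ` valued in the space `W` of functionals are modeled as
coefficient families `v : ℤ → W`; `v = O(ħ^k)` means `v m = 0` for `m < k`.  The
operation `cpow k = (i/ħ)^k` multiplies by `i^k` and shifts the `ħ`-grading down by
`k`.  As in statement 5, the symmetric multilinear maps are encoded on finite index
sets: `F j` are the entries (the local functionals, of order `ħ⁰`, hypothesis `hFord`;
a mixed family of interaction entries `S` and one field entry `F` covers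
`Γ(e_⊗^S ⊗ F)`), `A s = Tᶜ(⊗_{j∈s}F_j)` with `A ∅ = Tᶜ₀ = 0`, `A {j} = F j` (`T₁ = id`)
and `Tᶜₙ = O(ħ^{n−1})` (`hAord`); `B = Tᶜ_tree` on multisets of (arbitrary)
functionals, with `B₁ = id`, the `ħ`-order of a tree exceeding the sum of the orders
of its entries by the number of propagators (`hBord`).  The hypothesis of the
statement, `Tₙᶜ − Tᶜ_{tree,n} = O(ħⁿ)`, is `hdiff`.  `Γ` is given by the recursion
`Γ s = (i/ħ)^{|s|−1} A s − Σ_{P ⊢ s, |P|≥2} (i/ħ)^{|P|−1} B({Γ J}_J)` (`hrec`).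
Conclusions: `Γ(1) = Γ ∅ = 0`, `Γ(S) = Γ {j} = F j`, and all higher `Γ s` are `O(ħ)`.
-/
theorem vertex_functional_classical_limit
    {W : Type*} [AddCommGroup W] [Module ℂ W]
    {ι : Type*} [DecidableEq ι]
    (F : ι → ℤ → W) (A : Finset ι → ℤ → W)
    (B : Multiset (ℤ → W) → ℤ → W) (Γ : Finset ι → ℤ → W)
    (cpow : ℕ → (ℤ → W) → (ℤ → W))
    (hcpow : ∀ (k : ℕ) (v : ℤ → W) (n : ℤ), cpow k v n = Complex.I ^ k • v (n + k))
    (hB1 : ∀ v : ℤ → W, B {v} = v)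
    (hBord : ∀ (l : List (ℤ → W)) (o : List ℤ),
      List.Forall₂ (fun v (ov : ℤ) => ∀ k : ℤ, k < ov → v k = 0) l o →
      ∀ n : ℤ, n < o.sum + (l.length : ℤ) - 1 → B ↑l n = 0)
    (hFord : ∀ j, ∀ n : ℤ, n < 0 → F j n = 0)
    (hA0 : A ∅ = 0)
    (hA1 : ∀ j : ι, A {j} = F j)
    (hAord : ∀ s : Finset ι, ∀ n : ℤ, n < (s.card : ℤ) - 1 → A s n = 0)
    (hdiff : ∀ s : Finset ι, ∀ n : ℤ, n < (s.card : ℤ) → A s n = B (s.val.map F) n)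
    (hrec : ∀ s : Finset ι,
      Γ s = cpow (s.card - 1) (A s)
        - ∑ P ∈ Finset.univ.filter
            (fun P : Finpartition s => 2 ≤ P.parts.card),
            cpow (P.parts.card - 1) (B (P.parts.val.map Γ))) :
    Γ ∅ = 0 ∧ (∀ j : ι, Γ {j} = F j) ∧
    (∀ s : Finset ι, 2 ≤ s.card → ∀ n : ℤ, n < 1 → Γ s n = 0) := by
  classical
  have hΓ0 : Γ ∅ = 0 := by
    have h := hrec (∅ : Finset ι)
    have hf : (Finset.univ.filter
        (fun P : Finpartition (∅ : Finset ι) => 2 ≤ P.parts.card)) = ∅ := by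
      ext P
      simp only [Finset.mem_filter, Finset.mem_univ, true_and, Finset.notMem_empty,
        iff_false]
      have := P.card_parts_le_card
      simp only [Finset.card_empty] at this
      omega
    rw [hf, Finset.sum_empty, sub_zero, hA0] at h
    funext n
    rw [h, hcpow]
    simp
  have hΓ1 : ∀ j : ι, Γ {j} = F j := by
    intro j
    have h := hrec ({j} : Finset ι)
    have hf : (Finset.univ.filter
        (fun P : Finpartition ({j} : Finset ι) => 2 ≤ P.parts.card)) = ∅ := by
      ext P
      simp only [Finset.mem_filter, Finset.mem_univ, true_and, Finset.notMem_empty,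
        iff_false]
      have := P.card_parts_le_card
      simp only [Finset.card_singleton] at this
      omega
    rw [hf, Finset.sum_empty, sub_zero, hA1] at h
    funext n
    rw [h, hcpow]
    simp
  refine ⟨hΓ0, hΓ1, ?_⟩
  intro s
  induction s using Finset.strongInduction with
  | _ s IH =>
  intro hc2 n hn
  have hrecn := congrFun (hrec s) n
  rw [Pi.sub_apply, Finset.sum_apply] at hrecn
  set Flt := Finset.univ.filter (fun P : Finpartition s => 2 ≤ P.parts.card) with hFlt
  have hbot_mem : (⊥ : Finpartition s) ∈ Flt := by
    simp [hFlt, Finpartition.card_bot, hc2]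
  -- every non-discrete partition term vanishes
  have hothers : ∀ P ∈ Flt, P ≠ ⊥ →
      cpow (P.parts.card - 1) (B (P.parts.val.map Γ)) n = 0 := by
    intro P hP hPne
    have hPcard : 2 ≤ P.parts.card := by
      simpa [hFlt] using hP
    -- some part has at least two elements
    have hbig : ∃ J ∈ P.parts, 2 ≤ J.card := by
      by_contra hall
      push_neg at hall
      apply hPne
      have hsing : ∀ J ∈ P.parts, J.card = 1 := by
        intro J hJ
        have h1 : 1 ≤ J.card := Finset.card_pos.2 (P.nonempty_of_mem_parts hJ)
        have h2 := hall J hJ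
        omega
      have hsub : P.parts ⊆ s.map ⟨singleton, Finset.singleton_injective⟩ := by
        intro J hJ
        obtain ⟨a, rfl⟩ := Finset.card_eq_one.1 (hsing J hJ)
        have ha : a ∈ s := (P.le hJ) (Finset.mem_singleton_self a)
        exact Finset.mem_map.2 ⟨a, ha, rfl⟩
      have hcards : s.card = P.parts.card :=
        calc s.card = ∑ i ∈ P.parts, i.card := P.sum_card_parts.symm
          _ = ∑ _i ∈ P.parts, 1 := Finset.sum_congr rfl hsing
          _ = P.parts.card := by simp
      have hcardeq : (s.map ⟨singleton, Finset.singleton_injective⟩).card ≤ P.parts.card := by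
        rw [Finset.card_map]
        exact le_of_eq hcards
      have := Finset.eq_of_subset_of_card_le hsub hcardeq
      exact Finpartition.ext this
    obtain ⟨J₀, hJ₀, hJ₀2⟩ := hbig
    -- order bound for the entries of the tree
    set ord : Finset ι → ℤ := fun J => if 2 ≤ J.card then 1 else 0 with hord
    have hentry : ∀ J ∈ P.parts, ∀ k : ℤ, k < ord J → Γ J k = 0 := by
      intro J hJ k hk
      by_cases h2 : 2 ≤ J.card
      · -- J is a proper subset of s
        have hJs : J ⊆ s := P.le hJ
        have hJne : J ≠ s := by
          obtain ⟨J', hJ', hJJ'⟩ := Finset.exists_mem_ne hPcard J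
          obtain ⟨x, hx⟩ := P.nonempty_of_mem_parts hJ'
          intro h
          subst h
          have hd : Disjoint J' J := P.disjoint hJ' hJ hJJ'
          exact (Finset.disjoint_left.1 hd hx) (P.le hJ' hx)
        have hJss : J ⊂ s := Finset.ssubset_iff_subset_ne.2 ⟨hJs, hJne⟩
        have hk1 : k < 1 := by simpa [hord, h2] using hk
        exact IH J hJss h2 k hk1
      · have h1 : J.card = 1 := by
          have := Finset.card_pos.2 (P.nonempty_of_mem_parts hJ)
          omega
        obtain ⟨a, rfl⟩ := Finset.card_eq_one.1 h1
        have hk0 : k < 0 := by simpa [hord, h2] using hk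
        rw [hΓ1 a]
        exact hFord a k hk0
    -- represent the multiset of parts by a list
    obtain ⟨L, hL⟩ : ∃ L : List (Finset ι), (↑L : Multiset (Finset ι)) = P.parts.val :=
      ⟨P.parts.val.toList, Multiset.coe_toList _⟩
    have hmemL : ∀ J ∈ L, J ∈ P.parts := by
      intro J hJ
      have : J ∈ (↑L : Multiset (Finset ι)) := by exact_mod_cast hJ
      rw [hL] at this
      exact this
    have hmap : P.parts.val.map Γ = ((L.map Γ : List (ℤ → W)) : Multiset (ℤ → W)) := by
      rw [← hL]; rfl
    have hforall : List.Forall₂ (fun v (ov : ℤ) => ∀ k : ℤ, k < ov → v k = 0)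
        (L.map Γ) (L.map ord) := by
      rw [List.forall₂_map_left_iff, List.forall₂_map_right_iff, List.forall₂_same]
      intro J hJ
      exact hentry J (hmemL J hJ)
    have hsum : (L.map ord).sum = (P.parts.val.map ord).sum := by
      rw [← hL]; rfl
    have hsum' : ∑ J ∈ P.parts, ord J = (P.parts.val.map ord).sum := rfl
    have hge1 : (1 : ℤ) ≤ (L.map ord).sum := by
      rw [hsum, ← hsum']
      have h1 : ord J₀ = 1 := by simp [hord, hJ₀2]
      calc (1 : ℤ) = ord J₀ := h1.symm
        _ ≤ ∑ J ∈ P.parts, ord J := by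
            refine Finset.single_le_sum (fun J _ => ?_) hJ₀
            simp only [hord]
            split <;> norm_num
    have hlen : ((L.map Γ).length : ℤ) = (P.parts.card : ℤ) := by
      have : L.length = P.parts.card := by
        have := congrArg Multiset.card hL
        simpa using this
      simp [this]
    have hBzero : B ↑(L.map Γ) (n + ((P.parts.card - 1 : ℕ) : ℤ)) = 0 := by
      apply hBord _ _ hforall
      rw [hlen]
      have : ((P.parts.card - 1 : ℕ) : ℤ) = (P.parts.card : ℤ) - 1 := by
        have : 1 ≤ P.parts.card := by omega
        omega
      rw [this]
      omega
    rw [hcpow, hmap, hBzero, smul_zero]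
  have hsum_eq := Finset.sum_eq_single_of_mem (⊥ : Finpartition s) hbot_mem hothers
  rw [hsum_eq] at hrecn
  -- the discrete partition term equals the A-term via hdiff
  have hbotmap : (⊥ : Finpartition s).parts.val.map Γ = s.val.map F := by
    rw [Finpartition.parts_bot]
    rw [Finset.map_val, Multiset.map_map]
    exact Multiset.map_congr rfl fun j _ => hΓ1 j
  rw [hbotmap, Finpartition.card_bot, hcpow, hcpow] at hrecn
  have hcast : ((s.card - 1 : ℕ) : ℤ) = (s.card : ℤ) - 1 := by omega
  have hAB : A s (n + ((s.card - 1 : ℕ) : ℤ)) = B (s.val.map F) (n + ((s.card - 1 : ℕ) : ℤ)) := by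
    apply hdiff
    rw [hcast]
    omega
  rw [hrecn, hAB, sub_self]
end

section
/- Given the field equation for connected tree products, Tᶜ_tree(e_⊗^{iS/ħ} ⊗ δ(S₀+S)/δφ(x)) = δS₀/δφ(x), and the factorization Tᶜ_tree(e_⊗^{iS/ħ} ⊗ FG) = Tᶜ_tree(e_⊗^{iS/ħ}⊗F)·Tᶜ_tree(e_⊗^{iS/ħ}⊗G), the Master Ward Identity for tree diagrams holds: Tᶜ_tree(e_⊗^{iS/ħ} ⊗ (A + δ_A S)) = ∫ dx Tᶜ_tree(e_⊗^{iS/ħ} ⊗ Q(x)) · δS₀/δφ(x), where A = ∫ dx Q(x) δS₀/δφ(x) and δ_A S = ∫ dx Q(x) δS/δφ(x). -/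
theorem tree_level_MWI
    {A : Type*} [CommRing A] [Algebra ℂ A]
    {X : Type*} [Fintype X]
    (T : A →ₗ[ℂ] PowerSeries A)
    (Q dS0 dS : X → A)
    (hfield : ∀ x : X, T (dS0 x + dS x) = PowerSeries.C (R := A) (dS0 x))
    (hfact : ∀ F G : A, T (F * G) = T F * T G) :
    T ((∑ x : X, Q x * dS0 x) + (∑ x : X, Q x * dS x))
      = ∑ x : X, T (Q x) * PowerSeries.C (R := A) (dS0 x) := by
  have insertion_times_field_eq (x : X) :
      T (Q x * (dS0 x + dS x)) = T (Q x) * PowerSeries.C (R := A) (dS0 x) := by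
    rw [hfact, hfield]
  calc T ((∑ x : X, Q x * dS0 x) + (∑ x : X, Q x * dS x))
      = ∑ x : X, T (Q x * (dS0 x + dS x)) := by
        rw [← map_sum, ← Finset.sum_add_distrib]
        simp only [mul_add]
    _ = ∑ x : X, T (Q x) * PowerSeries.C (R := A) (dS0 x) :=
        Finset.sum_congr rfl fun x _ => insertion_times_field_eq x
end
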